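/- arXiv:1109.0046 — 2 statements merged into one kernel-verified Lean document; each statement's English description precedes it below -/
import Mathlib

section
/- Let m ≥ 1 and let 1 ≤ i ≤ m, 1 ≤ j ≤ m. Let e_i, e_j ∈ F_2[t_1,…,t_m] denote the i-th and j-th elementary symmetric polynomials in t_1,…,t_m. For each subset K of {1,…,m} with |K| = i OR j (bitwise or), choose an arbitrary monomial m_K of total degree i + j whose support is exactly K. Then e_i · e_j − Σ_K m_K belongs to the ideal J_m, the sum ranging over all subsets K ⊆ {1,…,m} with |K| = i OR j. (In particular, if i OR j > m the sum is empty and e_i · e_j ∈ J_m.) -/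
open MvPolynomial

/-- `J m` is the ideal of `F₂[t 1, …, t m]` generated by the elements
`t i ^ 2 * t j + t i * t j ^ 2` for `1 ≤ i, j ≤ m`. -/
noncomputable def J (m : ℕ) : Ideal (MvPolynomial (Fin m) (ZMod 2)) :=
  Ideal.span {p | ∃ i j : Fin m, p = X i ^ 2 * X j + X i * X j ^ 2}

/-!
If `x a ^ 2 * x b = x a * x b ^ 2` for all `a, b`, a factor `x a` can be moved to any other
variable of a monomial in which `x a` occurs squared, so a monomial in the `x z` depends only on
its support and its degree. Expanding `e_i * e_j = ∑_{A, B} (∏_{z ∈ A} x z) (∏_{z ∈ B} x z)`, the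
term of `(A, B)` therefore depends only on `K = A ∪ B`, and for `|K| ≤ i + j` it occurs
`C(|K|, i) * C(i, i + j - |K|)` times. In characteristic two only the parity of this number
matters, and by Lucas's theorem it is odd exactly when `i ⊆ |K|` and `i + j - |K| ⊆ i` as sets of
binary digits, that is, exactly when `|K| = i ||| j`.
-/

namespace Nat

theorem add_eq_or_add_and (a b : ℕ) : a + b = (a ||| b) + (a &&& b) := by
  induction a using Nat.strong_induction_on generalizing b with
  | _ a ih =>
    rcases Nat.eq_zero_or_pos a with rfl | ha
    · simp
    have hlow : (a ||| b) % 2 + (a &&& b) % 2 = a % 2 + b % 2 := by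
      have := or_mod_two_eq_one (a := a) (b := b)
      have := and_mod_two_eq_one (a := a) (b := b)
      omega
    have := ih (a / 2) (Nat.div_lt_self ha one_lt_two) (b / 2)
    rw [← or_div_two, ← and_div_two] at this
    omega

theorem add_eq_or_of_and_eq_zero {a b : ℕ} (h : a &&& b = 0) : a + b = a ||| b := by
  rw [add_eq_or_add_and, h, add_zero]

theorem or_le_add (a b : ℕ) : a ||| b ≤ a + b := by
  rw [add_eq_or_add_and]
  exact le_add_right _ _

theorem or_eq_right_iff_testBit {a b : ℕ} : a ||| b = b ↔ ∀ n, a.testBit n → b.testBit n := by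
  constructor
  · intro h n ha
    simpa [ha] using congrArg (testBit · n) h
  · intro h
    exact eq_of_testBit_eq fun n => by
      have := h n
      cases ha : a.testBit n <;> simp_all

theorem or_eq_right_iff_mod_two {a b : ℕ} :
    a ||| b = b ↔ a % 2 ≤ b % 2 ∧ a / 2 ||| b / 2 = b / 2 := by
  rw [← or_div_two]
  have := or_mod_two_eq_one (a := a) (b := b)
  constructor
  · intro h
    rw [h]
    omega
  · rintro ⟨h1, h2⟩
    rw [← Nat.div_add_mod (a ||| b) 2, h2]
    omega

theorem odd_choose_iff (n k : ℕ) : Odd (n.choose k) ↔ k ||| n = n := by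
  induction n using Nat.strong_induction_on generalizing k with
  | _ n ih =>
    rcases Nat.eq_zero_or_pos n with rfl | hn
    · cases k <;> simp
    rw [Nat.odd_iff, Choose.choose_modEq_choose_mod_mul_choose_div_nat (p := 2),
      or_eq_right_iff_mod_two, ← ih (n / 2) (Nat.div_lt_self hn one_lt_two), Nat.odd_iff,
      Nat.mul_mod]
    rcases Nat.mod_two_eq_zero_or_one n with h | h <;>
      rcases Nat.mod_two_eq_zero_or_one k with h' | h' <;>
      rcases Nat.mod_two_eq_zero_or_one ((n / 2).choose (k / 2)) with h'' | h'' <;>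
      simp [h, h', h'']

theorem or_eq_right_and_or_eq_right_iff_eq_or {i j k s : ℕ} (h : i + j = k + s) :
    i ||| k = k ∧ s ||| i = i ↔ k = i ||| j := by
  constructor
  · simp only [or_eq_right_iff_testBit]
    rintro ⟨hik, hsi⟩
    have bitwise {a b : ℕ} (hab : ∀ n, (i.testBit n → k.testBit n) →
        (s.testBit n → i.testBit n) → a.testBit n = b.testBit n) : a = b :=
      eq_of_testBit_eq fun n => hab n (hik n) (hsi n)
    have hk : k = i + (k ^^^ i) := by
      rw [add_eq_or_of_and_eq_zero] <;> refine bitwise fun n => ?_ <;>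
        simp only [testBit_or, testBit_and, testBit_xor, zero_testBit] <;>
        cases i.testBit n <;> cases k.testBit n <;> cases s.testBit n <;> decide
    have hj : j = (k ^^^ i) ||| s := by
      rw [← add_eq_or_of_and_eq_zero]
      · omega
      refine bitwise fun n => ?_
      simp only [testBit_and, testBit_xor, zero_testBit]
      cases i.testBit n <;> cases k.testBit n <;> cases s.testBit n <;> decide
    subst hj
    refine bitwise fun n => ?_
    simp only [testBit_or, testBit_xor]
    cases i.testBit n <;> cases k.testBit n <;> cases s.testBit n <;> decide
  · rintro rfl
    obtain rfl : s = i &&& j := by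
      have := add_eq_or_add_and i j
      omega
    simp +contextual [or_eq_right_iff_testBit]

end Nat

open Finset

theorem nsmul_eq_ite_odd {M : Type*} [AddCommMonoid M] [Module (ZMod 2) M] (n : ℕ) (y : M) :
    n • y = if Odd n then y else 0 := by
  rw [← Nat.cast_smul_eq_nsmul (ZMod 2)]
  split_ifs with h
  · rw [ZMod.natCast_eq_one_iff_odd.2 h, one_smul]
  · rw [ZMod.natCast_eq_zero_iff_even.2 (Nat.not_odd_iff_even.1 h), zero_smul]

section UnionPairs

variable {α : Type*} [DecidableEq α] [Fintype α]

theorem card_filter_union_eq_of_subset {A K : Finset α} (hAK : A ⊆ K) {j : ℕ}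
    (hj : #K ≤ #A + j) :
    #{B ∈ powersetCard j univ | A ∪ B = K} = (#A).choose (#A + j - #K) := by
  rw [← card_powersetCard]
  refine card_nbij' (· ∩ A) ((K \ A) ∪ ·) ?_ ?_ ?_ ?_
  · rintro B hB
    simp only [coe_filter, mem_powersetCard, subset_univ, true_and] at hB
    obtain ⟨hBj, rfl⟩ := hB
    simp only [mem_coe, mem_powersetCard, inter_subset_right, true_and]
    have := card_union_add_card_inter A B
    rw [inter_comm]
    omega
  · intro C hC
    simp only [mem_coe, mem_powersetCard] at hC
    simp only [coe_filter, mem_powersetCard, subset_univ, true_and]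
    constructor
    · rw [card_union_of_disjoint (disjoint_of_subset_right hC.1 sdiff_disjoint),
        card_sdiff_of_subset hAK, hC.2]
      have := card_le_card hAK
      omega
    · ext z
      have := @hC.1 z
      have := @hAK z
      simp only [mem_union, mem_sdiff]
      tauto
  · intro B hB
    simp only [coe_filter, mem_powersetCard, subset_univ, true_and] at hB
    ext z
    have := congrArg (z ∈ ·) hB.2
    simp only [mem_union, eq_iff_iff, mem_sdiff, mem_inter] at this ⊢
    tauto
  · intro C hC
    simp only [mem_coe, mem_powersetCard] at hC
    ext z
    have := @hC.1 z
    simp only [mem_inter, mem_union, mem_sdiff]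
    tauto

def unionPairs (i j : ℕ) (K : Finset α) : Finset (Finset α × Finset α) :=
  {p ∈ powersetCard i univ ×ˢ powersetCard j univ | p.1 ∪ p.2 = K}

theorem mem_unionPairs {i j : ℕ} {K : Finset α} {p : Finset α × Finset α} :
    p ∈ unionPairs i j K ↔ #p.1 = i ∧ #p.2 = j ∧ p.1 ∪ p.2 = K := by
  simp [unionPairs, and_assoc]

theorem card_unionPairs {i j : ℕ} {K : Finset α} (h : #K ≤ i + j) :
    #(unionPairs i j K) = (#K).choose i * i.choose (i + j - #K) := by
  have hfiber : ∀ A ∈ powersetCard i (univ : Finset α),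
      #{B ∈ powersetCard j univ | A ∪ B = K} = if A ⊆ K then i.choose (i + j - #K) else 0 := by
    intro A hA
    obtain ⟨-, rfl⟩ := mem_powersetCard.1 hA
    split_ifs with hAK
    · exact card_filter_union_eq_of_subset hAK (by omega)
    · exact card_eq_zero.2 <| filter_false_of_mem fun B _ hB => hAK (hB ▸ subset_union_left)
  have hsub : {A ∈ powersetCard i (univ : Finset α) | A ⊆ K} = powersetCard i K := by
    ext A
    simp [and_comm]
  rw [unionPairs, card_filter, sum_product, sum_congr rfl fun A _ => (card_filter _ _).symm,
    sum_congr rfl hfiber, ← sum_filter, hsub, sum_const, card_powersetCard, smul_eq_mul]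

theorem odd_card_unionPairs_iff (K : Finset α) (i j : ℕ) :
    Odd #(unionPairs i j K) ↔ #K = i ||| j := by
  by_cases h : #K ≤ i + j
  · rw [card_unionPairs h, Nat.odd_mul, Nat.odd_choose_iff, Nat.odd_choose_iff]
    exact Nat.or_eq_right_and_or_eq_right_iff_eq_or (by omega)
  · have hempty : unionPairs i j K = ∅ :=
      eq_empty_of_forall_notMem fun p hp => h <| by
        obtain ⟨hi, hj, hpK⟩ := mem_unionPairs.1 hp
        rw [← hpK, ← hi, ← hj]
        exact card_union_le _ _
    have := Nat.or_le_add i j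
    rw [hempty, card_empty]
    simp only [Nat.not_odd_zero, false_iff]
    omega

end UnionPairs

section Monomials

variable {M σ : Type*} [CommMonoid M] {x : σ → M}

theorem mul_prod_eq_mul_prod_of_mem (hx : ∀ a b, x a ^ 2 * x b = x a * x b ^ 2)
    {K : Finset σ} {a b : σ} (ha : a ∈ K) (hb : b ∈ K) :
    x a * ∏ z ∈ K, x z = x b * ∏ z ∈ K, x z := by
  classical
  obtain rfl | hab := eq_or_ne a b
  · rfl
  rw [← mul_prod_erase K x ha, ← mul_prod_erase _ x (mem_erase.2 ⟨hab.symm, hb⟩)]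
  calc x a * (x a * (x b * ∏ z ∈ (K.erase a).erase b, x z))
      = x a ^ 2 * x b * ∏ z ∈ (K.erase a).erase b, x z := by rw [sq]; ac_rfl
    _ = x a * x b ^ 2 * ∏ z ∈ (K.erase a).erase b, x z := by rw [hx]
    _ = x b * (x a * (x b * ∏ z ∈ (K.erase a).erase b, x z)) := by rw [sq]; ac_rfl

theorem pow_mul_prod_eq_pow_mul_prod_of_mem (hx : ∀ a b, x a ^ 2 * x b = x a * x b ^ 2)
    {K : Finset σ} {a b : σ} (ha : a ∈ K) (hb : b ∈ K) (n : ℕ) :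
    x a ^ n * ∏ z ∈ K, x z = x b ^ n * ∏ z ∈ K, x z := by
  induction n with
  | zero => simp
  | succ n ih =>
    calc x a ^ (n + 1) * ∏ z ∈ K, x z = x a ^ n * (x a * ∏ z ∈ K, x z) := by
          rw [pow_succ, mul_assoc]
      _ = x b * (x a ^ n * ∏ z ∈ K, x z) := by
        rw [mul_prod_eq_mul_prod_of_mem hx ha hb, mul_left_comm]
      _ = x b ^ (n + 1) * ∏ z ∈ K, x z := by rw [ih, pow_succ', mul_assoc]

theorem prod_pow_mul_prod_eq_pow_mul_prod (hx : ∀ a b, x a ^ 2 * x b = x a * x b ^ 2)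
    {K : Finset σ} {b : σ} (hb : b ∈ K) (S : Finset σ) {r : σ → ℕ}
    (hr : ∀ z ∈ S, r z ≠ 0 → z ∈ K) :
    (∏ z ∈ S, x z ^ r z) * ∏ z ∈ K, x z = x b ^ (∑ z ∈ S, r z) * ∏ z ∈ K, x z := by
  classical
  induction S using Finset.induction_on with
  | empty => simp
  | insert a S haS ih =>
    have hra : x a ^ r a * ∏ z ∈ K, x z = x b ^ r a * ∏ z ∈ K, x z := by
      by_cases h : r a = 0
      · simp [h]
      · exact pow_mul_prod_eq_pow_mul_prod_of_mem hx (hr a (mem_insert_self a S) h) hb _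
    rw [prod_insert haS, sum_insert haS, mul_assoc, ih fun z hz => hr z (mem_insert_of_mem hz),
      mul_left_comm, hra, ← mul_assoc, ← pow_add, add_comm]

variable [Fintype σ]

theorem prod_pow_eq_pow_mul_prod (hx : ∀ a b, x a ^ 2 * x b = x a * x b ^ 2)
    {u : σ → ℕ} {b : σ} (hb : u b ≠ 0) :
    ∏ z, x z ^ u z = x b ^ (∑ z, u z - #{z | u z ≠ 0}) * ∏ z with u z ≠ 0, x z := by
  have hsum : ∑ z, u z - #{z | u z ≠ 0} = ∑ z with u z ≠ 0, (u z - 1) := by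
    rw [sum_tsub_distrib _ fun z hz => Nat.one_le_iff_ne_zero.2 (mem_filter.1 hz).2,
      sum_filter_ne_zero, card_eq_sum_ones]
  rw [hsum, ← prod_pow_mul_prod_eq_pow_mul_prod hx (by simpa using hb) _ fun z hz _ => hz,
    ← prod_mul_distrib,
    ← prod_filter_of_ne (p := fun z => u z ≠ 0) fun z _ hz h => by simp [h] at hz]
  refine prod_congr rfl fun z hz => ?_
  rw [← pow_succ, Nat.sub_add_cancel (Nat.one_le_iff_ne_zero.2 (mem_filter.1 hz).2)]

theorem prod_pow_eq_prod_pow_of_support_eq (hx : ∀ a b, x a ^ 2 * x b = x a * x b ^ 2)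
    {u v : σ → ℕ} (hsupp : ∀ z, u z ≠ 0 ↔ v z ≠ 0) (hsum : ∑ z, u z = ∑ z, v z) :
    ∏ z, x z ^ u z = ∏ z, x z ^ v z := by
  by_cases h : ∃ b, u b ≠ 0
  · obtain ⟨b, hb⟩ := h
    rw [prod_pow_eq_pow_mul_prod hx hb, prod_pow_eq_pow_mul_prod hx ((hsupp b).1 hb), hsum,
      filter_congr fun z _ => hsupp z]
  · push Not at h
    have h' : ∀ z, v z = 0 := fun z => not_not.1 fun hv => (hsupp z).2 hv (h z)
    simp [h, h']

variable [DecidableEq σ]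

theorem prod_mul_prod_eq_prod_pow (A B : Finset σ) :
    (∏ z ∈ A, x z) * ∏ z ∈ B, x z =
      ∏ z, x z ^ ((if z ∈ A then 1 else 0) + if z ∈ B then 1 else 0) := by
  simp only [pow_add, prod_mul_distrib, pow_ite, pow_one, pow_zero, prod_ite_mem, univ_inter]

theorem prod_mul_prod_eq_prod_pow_of_union_eq (hx : ∀ a b, x a ^ 2 * x b = x a * x b ^ 2)
    {A B K : Finset σ} (hK : A ∪ B = K) {v : σ → ℕ} (hv : ∀ z, v z ≠ 0 ↔ z ∈ K)
    (hsum : ∑ z, v z = #A + #B) :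
    (∏ z ∈ A, x z) * ∏ z ∈ B, x z = ∏ z, x z ^ v z := by
  rw [prod_mul_prod_eq_prod_pow]
  refine prod_pow_eq_prod_pow_of_support_eq hx (fun z => ?_) ?_
  · rw [hv, ← hK, mem_union]
    split_ifs <;> simp_all
  · rw [hsum, sum_add_distrib, sum_boole, sum_boole]
    simp

theorem prod_mul_prod_eq_of_union_eq (hx : ∀ a b, x a ^ 2 * x b = x a * x b ^ 2)
    {A B A' B' : Finset σ} (hU : A ∪ B = A' ∪ B') (hcard : #A + #B = #A' + #B') :
    (∏ z ∈ A, x z) * ∏ z ∈ B, x z = (∏ z ∈ A', x z) * ∏ z ∈ B', x z := by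
  rw [prod_mul_prod_eq_prod_pow_of_union_eq hx hU
    (v := fun z => (if z ∈ A' then 1 else 0) + if z ∈ B' then 1 else 0), prod_mul_prod_eq_prod_pow]
  · intro z
    rw [mem_union]
    split_ifs <;> simp_all
  · rw [hcard, sum_add_distrib, sum_boole, sum_boole]
    simp

end Monomials

section CharTwo

variable {R σ : Type*} [CommSemiring R] [Module (ZMod 2) R] [Fintype σ] [DecidableEq σ]
  {x : σ → R}

theorem sum_unionPairs_prod_mul_prod (hx : ∀ a b, x a ^ 2 * x b = x a * x b ^ 2)
    {i j : ℕ} (K : Finset σ) {v : σ → ℕ} (hv : #K = i ||| j → ∀ z, v z ≠ 0 ↔ z ∈ K)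
    (hsum : #K = i ||| j → ∑ z, v z = i + j) :
    ∑ p ∈ unionPairs i j K, (∏ z ∈ p.1, x z) * ∏ z ∈ p.2, x z =
      if #K = i ||| j then ∏ z, x z ^ v z else 0 := by
  by_cases hK : #K = i ||| j
  · rw [if_pos hK, sum_eq_card_nsmul fun p hp => ?_, nsmul_eq_ite_odd,
      if_pos ((odd_card_unionPairs_iff K i j).2 hK)]
    obtain ⟨hi, hj, hpK⟩ := mem_unionPairs.1 hp
    exact prod_mul_prod_eq_prod_pow_of_union_eq hx hpK (hv hK) (by rw [hsum hK, hi, hj])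
  · rw [if_neg hK]
    obtain hempty | ⟨q, hq⟩ := (unionPairs i j K).eq_empty_or_nonempty
    · rw [hempty, sum_empty]
    rw [sum_eq_card_nsmul (b := (∏ z ∈ q.1, x z) * ∏ z ∈ q.2, x z) fun p hp => ?_,
      nsmul_eq_ite_odd, if_neg (mt (odd_card_unionPairs_iff K i j).1 hK)]
    obtain ⟨hi, hj, hpK⟩ := mem_unionPairs.1 hp
    obtain ⟨hi', hj', hqK⟩ := mem_unionPairs.1 hq
    exact prod_mul_prod_eq_of_union_eq hx (hpK.trans hqK.symm) (by rw [hi, hj, hi', hj'])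

theorem sum_prod_mul_sum_prod_eq (hx : ∀ a b, x a ^ 2 * x b = x a * x b ^ 2) (i j : ℕ)
    (v : Finset σ → σ → ℕ)
    (hv : ∀ K : Finset σ, #K = i ||| j → ∑ z, v K z = i + j ∧ ∀ z, v K z ≠ 0 ↔ z ∈ K) :
    (∑ A ∈ powersetCard i univ, ∏ z ∈ A, x z) * (∑ B ∈ powersetCard j univ, ∏ z ∈ B, x z) =
      ∑ K with #K = i ||| j, ∏ z, x z ^ v K z := by
  rw [sum_mul_sum, ← sum_product', ← sum_fiberwise _ (fun p => p.1 ∪ p.2), sum_filter]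
  exact sum_congr rfl fun K _ =>
    sum_unionPairs_prod_mul_prod hx K (fun hK => (hv K hK).2) (fun hK => (hv K hK).1)

end CharTwo

theorem mk_X_sq_mul_mk_X {m : ℕ} (a b : Fin m) :
    Ideal.Quotient.mk (J m) (X a) ^ 2 * Ideal.Quotient.mk (J m) (X b) =
      Ideal.Quotient.mk (J m) (X a) * Ideal.Quotient.mk (J m) (X b) ^ 2 := by
  simp only [← map_pow, ← map_mul]
  rw [Ideal.Quotient.eq, CharTwo.sub_eq_add]
  exact Ideal.subset_span ⟨a, b, rfl⟩

theorem stmt_15_general (m : ℕ) (i j : ℕ) (a : Finset (Fin m) → Fin m → ℕ)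
    (ha : ∀ K : Finset (Fin m), K.card = i ||| j →
      (∑ x, a K x) = i + j ∧ ∀ x, (a K x ≠ 0 ↔ x ∈ K)) :
    esymm (Fin m) (ZMod 2) i * esymm (Fin m) (ZMod 2) j -
        ∑ K ∈ Finset.univ.filter (fun K : Finset (Fin m) => K.card = i ||| j),
          ∏ x, X x ^ a K x ∈ J m := by
  rw [← Ideal.Quotient.eq]
  simp only [esymm, map_mul, map_sum, map_prod, map_pow]
  exact sum_prod_mul_sum_prod_eq mk_X_sq_mul_mk_X i j a ha

/-- Let `e i, e j` be elementary symmetric polynomials in `F₂[t 1, …, t m]` with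
`1 ≤ i, j ≤ m`.  For each subset `K` of `{1,…,m}` with `|K| = i ||| j` (bitwise or), choose an
arbitrary monomial of total degree `i + j` with support exactly `K` (given here by its
exponent vector `a K`).  Then `e i * e j - ∑_K ∏ x, t x ^ (a K x)` lies in the ideal `J m`,
the sum ranging over the subsets `K` with `|K| = i ||| j`. -/
theorem stmt_15 (m : ℕ) (hm : 1 ≤ m) (i j : ℕ) (hi1 : 1 ≤ i) (him : i ≤ m)
    (hj1 : 1 ≤ j) (hjm : j ≤ m) (a : Finset (Fin m) → Fin m → ℕ)
    (ha : ∀ K : Finset (Fin m), K.card = i ||| j →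
      (∑ x, a K x) = i + j ∧ ∀ x, (a K x ≠ 0 ↔ x ∈ K)) :
    esymm (Fin m) (ZMod 2) i * esymm (Fin m) (ZMod 2) j -
        ∑ K ∈ Finset.univ.filter (fun K : Finset (Fin m) => K.card = i ||| j),
          ∏ x, X x ^ a K x ∈ J m :=
  stmt_15_general m i j a ha
end

section
/- Let m ≥ 1 and let n be an integer with 1 ≤ n ≤ m, with binary expansion n = Σ_{k ∈ B} 2^k where B is the set of binary digits of n equal to 1. Let e_d ∈ F_2[t_1,…,t_m] denote the d-th elementary symmetric polynomial in t_1,…,t_m. Then e_n − ∏_{k ∈ B} e_{2^k} belongs to the ideal J_m. (This is the universal relation w_n = ∏_k w_{2^k}^{a_k} modulo the canonical ideal, for the binary expansion n = Σ_k a_k 2^k.) -/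
open MvPolynomial

/-!
Modulo `J m` the image of a monomial depends only on its support and its degree: the relation
`t_i² t_j ≡ t_i t_j²` moves one unit of exponent between two variables of the support. Expanding
`e_a e_b = ∑ t^S t^T` and grouping the pairs `(S, T)` by `U = S ∪ T`, all terms over `U` have the
same image, and there are `C(|U|, a) C(a, a + b - |U|)` of them. For `a = 2^k > b` this number is
odd if `|U| = a + b` and even otherwise, so `e_{2^k} e_b ≡ e_{2^k + b}`. Peeling off the highest
binary digit of `n` then gives `e_n ≡ ∏ e_{2^k}`.
-/

open Finset

namespace Nat

theorem odd_choose_two_pow_add {k b : ℕ} (hb : b < 2 ^ k) : Odd ((2 ^ k + b).choose (2 ^ k)) := by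
  induction k generalizing b with
  | zero =>
    obtain rfl : b = 0 := by omega
    simp
  | succ k ih =>
    have lucas := Choose.choose_modEq_choose_mod_mul_choose_div_nat
      (p := 2) (n := 2 ^ (k + 1) + b) (k := 2 ^ (k + 1))
    have hn_div : (2 ^ (k + 1) + b) / 2 = 2 ^ k + b / 2 := by rw [pow_succ]; omega
    have hk_div : 2 ^ (k + 1) / 2 = 2 ^ k := by rw [pow_succ]; omega
    have hk_mod : 2 ^ (k + 1) % 2 = 0 := by rw [pow_succ]; omega
    rw [hn_div, hk_div, hk_mod, choose_zero_right, one_mul] at lucas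
    rw [odd_iff, lucas, ← odd_iff]
    exact ih (by rw [pow_succ] at hb; omega)

theorem even_choose_two_pow {k c : ℕ} (hc0 : 0 < c) (hc : c < 2 ^ k) :
    Even ((2 ^ k).choose c) :=
  even_iff_two_dvd.2 (prime_two.dvd_choose_pow hc0.ne' hc.ne)

end Nat

theorem ZModModule.nsmul_eq_self_of_odd {M : Type*} [AddCommGroup M] [Module (ZMod 2) M]
    {n : ℕ} (hn : Odd n) (x : M) : n • x = x := by
  rw [← Nat.cast_smul_eq_nsmul (ZMod 2), (ZMod.natCast_eq_one_iff_odd).2 hn, one_smul]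

theorem ZModModule.nsmul_eq_zero_of_even {M : Type*} [AddCommGroup M] [Module (ZMod 2) M]
    {n : ℕ} (hn : Even n) (x : M) : n • x = 0 := by
  rw [← Nat.cast_smul_eq_nsmul (ZMod 2), (ZMod.natCast_eq_zero_iff_even).2 hn, zero_smul]

/-- A pair `(S, T)` with union `U` is determined by `S ⊆ U` and `T ∩ S`, a subset of `S` with
`a + b - #U` elements. -/
theorem Finset.card_filter_union_eq_choose_mul_choose {α : Type*} [DecidableEq α] [Fintype α]
    (a b : ℕ) (U : Finset α) (hU : #U ≤ a + b) :
    #{p ∈ powersetCard a univ ×ˢ powersetCard b univ | p.1 ∪ p.2 = U} =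
      (#U).choose a * a.choose (a + b - #U) := by
  calc _ = #((powersetCard a U).sigma fun S => powersetCard (a + b - #U) S) := by
        refine card_nbij' (fun p => ⟨p.1, p.2 ∩ p.1⟩) (fun q => (q.1, (U \ q.1) ∪ q.2))
          ?_ ?_ ?_ ?_
        · rintro ⟨S, T⟩ hp
          simp only [coe_filter, mem_product, mem_powersetCard_univ, Set.mem_ofPred_eq] at hp
          obtain ⟨⟨hS, hT⟩, rfl⟩ := hp
          have := card_union_add_card_inter S T
          simp only [coe_sigma, Set.mem_sigma_iff, mem_coe, mem_powersetCard]
          refine ⟨⟨subset_union_left, hS⟩, inter_subset_right, ?_⟩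
          rw [inter_comm]
          omega
        · rintro ⟨S, W⟩ hq
          simp only [coe_sigma, Set.mem_sigma_iff, mem_coe, mem_powersetCard] at hq
          obtain ⟨⟨hSU, hS⟩, hWS, hW⟩ := hq
          have := card_sdiff_of_subset hSU
          have := card_le_card hSU
          simp only [coe_filter, mem_product, mem_powersetCard_univ, Set.mem_ofPred_eq]
          refine ⟨⟨hS, ?_⟩, ?_⟩
          · rw [card_union_of_disjoint (sdiff_disjoint.mono_right hWS)]
            omega
          · rw [← union_assoc, union_sdiff_of_subset hSU, union_eq_left]
            exact hWS.trans hSU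
        · rintro ⟨S, T⟩ hp
          simp only [coe_filter, Set.mem_ofPred_eq] at hp
          simp only [← hp.2, Prod.mk.injEq, true_and]
          ext x
          simp only [mem_union, mem_sdiff, mem_inter]
          tauto
        · rintro ⟨S, W⟩ hq
          simp only [coe_sigma, Set.mem_sigma_iff, mem_coe, mem_powersetCard] at hq
          simp only [Sigma.mk.injEq, heq_eq_eq, true_and]
          ext x
          have := @hq.2.1 x
          simp only [mem_inter, mem_union, mem_sdiff]
          tauto
    _ = _ := by
      rw [card_sigma, sum_congr rfl fun S hS => by
        rw [card_powersetCard, (mem_powersetCard.1 hS).2], sum_const, card_powersetCard,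
        smul_eq_mul]

variable {m : ℕ}

theorem mk_X_sq_mul_X (i j : Fin m) :
    Ideal.Quotient.mk (J m) (X i ^ 2 * X j) = Ideal.Quotient.mk (J m) (X i * X j ^ 2) := by
  rw [Ideal.Quotient.eq, CharTwo.sub_eq_add]
  exact Ideal.subset_span ⟨i, j, rfl⟩

theorem mk_mul_X_eq_of_dvd {P : MvPolynomial (Fin m) (ZMod 2)} {i j : Fin m}
    (h : X i * X j ∣ P) :
    Ideal.Quotient.mk (J m) (P * X i) = Ideal.Quotient.mk (J m) (P * X j) := by
  obtain ⟨Q, rfl⟩ := h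
  rw [show X i * X j * Q * X i = Q * (X i ^ 2 * X j) by ring,
    show X i * X j * Q * X j = Q * (X i * X j ^ 2) by ring, map_mul, mk_X_sq_mul_X, ← map_mul]

theorem mk_prod_X_mul_prod_X_of_subset {U V : Finset (Fin m)} (hVU : V ⊆ U) {j : Fin m}
    (hj : j ∈ U) :
    Ideal.Quotient.mk (J m) ((∏ i ∈ U, X i) * ∏ i ∈ V, X i) =
      Ideal.Quotient.mk (J m) ((∏ i ∈ U, X i) * X j ^ #V) := by
  induction V using Finset.induction_on with
  | empty => simp
  | insert a V ha ih =>
    have haU : a ∈ U := hVU (mem_insert_self a V)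
    have hmove : Ideal.Quotient.mk (J m) ((∏ i ∈ U, X i) * (∏ i ∈ V, X i) * X a) =
        Ideal.Quotient.mk (J m) ((∏ i ∈ U, X i) * (∏ i ∈ V, X i) * X j) := by
      rcases eq_or_ne a j with rfl | haj
      · rfl
      have hdvd : ∏ i ∈ {a, j}, X i ∣ ∏ i ∈ U, (X i : MvPolynomial (Fin m) (ZMod 2)) :=
        prod_dvd_prod_of_subset _ _ _ (by simp [insert_subset_iff, haU, hj])
      rw [prod_pair haj] at hdvd
      exact mk_mul_X_eq_of_dvd (dvd_mul_of_dvd_left hdvd _)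
    calc _ = Ideal.Quotient.mk (J m) ((∏ i ∈ U, X i) * (∏ i ∈ V, X i) * X a) := by
          rw [prod_insert ha]; ring_nf
      _ = _ := by
        rw [hmove, map_mul, ih ((subset_insert a V).trans hVU), ← map_mul,
          card_insert_of_notMem ha]
        ring_nf

theorem mk_prod_X_mul_prod_X_congr {S T S' T' : Finset (Fin m)} (hU : S ∪ T = S' ∪ T')
    (hc : #(S ∩ T) = #(S' ∩ T')) :
    Ideal.Quotient.mk (J m) ((∏ i ∈ S, X i) * ∏ i ∈ T, X i) =
      Ideal.Quotient.mk (J m) ((∏ i ∈ S', X i) * ∏ i ∈ T', X i) := by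
  rw [← prod_union_inter (s₁ := S), ← prod_union_inter (s₁ := S'), ← hU]
  rcases (S ∩ T).eq_empty_or_nonempty with h | ⟨j, hj⟩
  · rw [h, card_empty, eq_comm, card_eq_zero] at hc
    rw [h, hc]
  · have hjU : j ∈ S ∪ T := inter_subset_union hj
    rw [mk_prod_X_mul_prod_X_of_subset inter_subset_union hjU,
      mk_prod_X_mul_prod_X_of_subset (hU ▸ inter_subset_union) hjU, hc]

theorem sum_filter_union_mk_prod_X_mul_prod_X (a b : ℕ) (hodd : Odd ((a + b).choose a))
    (heven : ∀ c, 0 < c → c ≤ b → Even (a.choose c)) (U : Finset (Fin m)) (hU : #U ≤ a + b) :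
    ∑ p ∈ {p ∈ powersetCard a univ ×ˢ powersetCard b univ | p.1 ∪ p.2 = U},
        Ideal.Quotient.mk (J m) ((∏ i ∈ p.1, X i) * ∏ i ∈ p.2, X i) =
      if #U = a + b then Ideal.Quotient.mk (J m) (∏ i ∈ U, X i) else 0 := by
  set F := {p ∈ powersetCard a (univ : Finset (Fin m)) ×ˢ
    powersetCard b (univ : Finset (Fin m)) | p.1 ∪ p.2 = U}
  have hcard : #F = (#U).choose a * a.choose (a + b - #U) :=
    card_filter_union_eq_choose_mul_choose a b U hU
  have hinter : ∀ p ∈ F, #(p.1 ∩ p.2) = a + b - #U := by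
    intro p hp
    simp only [F, mem_filter, mem_product, mem_powersetCard_univ] at hp
    have := card_union_add_card_inter p.1 p.2
    rw [hp.1.1, hp.1.2, hp.2] at this
    omega
  split_ifs with h
  · rw [sum_eq_card_nsmul (b := Ideal.Quotient.mk (J m) (∏ i ∈ U, X i)), hcard, h, Nat.sub_self,
      Nat.choose_zero_right, mul_one, ZModModule.nsmul_eq_self_of_odd hodd]
    intro p hp
    rw [← mul_one (∏ i ∈ U, X i), ← prod_empty (f := X)]
    refine mk_prod_X_mul_prod_X_congr ((mem_filter.1 hp).2.trans (union_empty U).symm) ?_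
    rw [hinter p hp, inter_empty, card_empty, h, Nat.sub_self]
  · rcases F.eq_empty_or_nonempty with hF | ⟨p₀, hp₀⟩
    · rw [hF, sum_empty]
    rw [sum_eq_card_nsmul fun p hp => mk_prod_X_mul_prod_X_congr
        ((mem_filter.1 hp).2.trans (mem_filter.1 hp₀).2.symm)
        ((hinter p hp).trans (hinter p₀ hp₀).symm),
      ZModModule.nsmul_eq_zero_of_even]
    rw [hcard]
    by_cases ha : a ≤ #U
    · exact (heven _ (by omega) (by omega)).mul_left _
    · rw [Nat.choose_eq_zero_of_lt (by omega)]
      exact Even.zero.mul_right _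

theorem mk_esymm_mul_esymm (a b : ℕ) (hodd : Odd ((a + b).choose a))
    (heven : ∀ c, 0 < c → c ≤ b → Even (a.choose c)) :
    Ideal.Quotient.mk (J m) (esymm (Fin m) (ZMod 2) a * esymm (Fin m) (ZMod 2) b) =
      Ideal.Quotient.mk (J m) (esymm (Fin m) (ZMod 2) (a + b)) := by
  simp only [esymm, sum_mul_sum, ← sum_product', map_sum]
  rw [← sum_fiberwise_of_maps_to (t := {U | #U ≤ a + b}) (g := fun p => p.1 ∪ p.2)]
  · rw [sum_congr rfl fun U hU =>
        sum_filter_union_mk_prod_X_mul_prod_X a b hodd heven U (mem_filter.1 hU).2, sum_ite,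
      sum_const_zero, add_zero, filter_filter]
    congr 1
    ext U
    simp only [mem_filter, mem_univ, true_and, mem_powersetCard_univ, and_iff_right_iff_imp]
    exact le_of_eq
  · intro p hp
    simp only [mem_product, mem_powersetCard_univ] at hp
    simpa [← hp.1, ← hp.2] using card_union_le p.1 p.2

theorem mk_esymm_two_pow_mul_esymm {k b : ℕ} (hb : b < 2 ^ k) :
    Ideal.Quotient.mk (J m) (esymm (Fin m) (ZMod 2) (2 ^ k) * esymm (Fin m) (ZMod 2) b) =
      Ideal.Quotient.mk (J m) (esymm (Fin m) (ZMod 2) (2 ^ k + b)) :=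
  mk_esymm_mul_esymm _ _ (Nat.odd_choose_two_pow_add hb)
    fun _ hc0 hcb => Nat.even_choose_two_pow hc0 (hcb.trans_lt hb)

theorem mk_esymm_sum_two_pow (s : Finset ℕ) :
    Ideal.Quotient.mk (J m) (esymm (Fin m) (ZMod 2) (∑ k ∈ s, 2 ^ k)) =
      ∏ k ∈ s, Ideal.Quotient.mk (J m) (esymm (Fin m) (ZMod 2) (2 ^ k)) := by
  induction s using Finset.induction_on_max with
  | empty => simp [esymm_zero]
  | insert k s hlt ih =>
    have hk : k ∉ s := fun hk => (hlt k hk).false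
    rw [sum_insert hk, prod_insert hk, ← ih, ← map_mul,
      mk_esymm_two_pow_mul_esymm (Nat.geomSum_lt le_rfl hlt)]

theorem stmt_16_general (m : ℕ) (n : ℕ) :
    esymm (Fin m) (ZMod 2) n -
        ∏ k ∈ (Finset.range (n + 1)).filter (fun k => n.testBit k),
          esymm (Fin m) (ZMod 2) (2 ^ k) ∈ J m := by
  have hbits : (range (n + 1)).filter (fun k => n.testBit k) = n.bitIndices.toFinset := by
    ext k
    simp only [mem_filter, mem_range, List.mem_toFinset, Nat.mem_bitIndices,
      and_iff_right_iff_imp]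
    intro hk
    exact (Nat.lt_two_pow_self.trans_le (Nat.ge_two_pow_of_testBit hk)).trans (Nat.lt_succ_self n)
  rw [← Ideal.Quotient.eq, map_prod, hbits, ← mk_esymm_sum_two_pow,
    Finset.sum_toFinset_bitIndices_two_pow]

/-- Let `1 ≤ n ≤ m` with binary expansion `n = ∑_{k ∈ B} 2 ^ k`, where
`B = {k : n.testBit k}` is the set of binary digits of `n` equal to `1`.  Then
`e n - ∏_{k ∈ B} e (2 ^ k)` lies in the ideal `J m`, where `e d` denotes the `d`-th
elementary symmetric polynomial in `F₂[t 1, …, t m]`.  (This is the universal relation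
`w n = ∏_k (w (2 ^ k)) ^ (a k)` modulo the canonical ideal, for `n = ∑_k a k * 2 ^ k`.) -/
theorem stmt_16 (m : ℕ) (hm : 1 ≤ m) (n : ℕ) (hn1 : 1 ≤ n) (hnm : n ≤ m) :
    esymm (Fin m) (ZMod 2) n -
        ∏ k ∈ (Finset.range (n + 1)).filter (fun k => n.testBit k),
          esymm (Fin m) (ZMod 2) (2 ^ k) ∈ J m :=
  stmt_16_general m n
end
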